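/- arXiv:2103.15882 — 2 statements merged into one kernel-verified Lean document; each statement's English description precedes it below -/
import Mathlib

section
/- Let N, M, D, L be integers with N ≥ 1, 1 ≤ M ≤ D, M + D = N and L ≥ 0, and let Δ₁ > 0, ε ∈ (0,1), and κ > L/N. Suppose V : ℝ² × [τ₁,∞) → ℝ is C¹ and for every τ ≥ τ₁ and every (ρ,φ) with W₀(ρ,φ,τ₁) ≤ Δ₁² one has (1−ε) W₀(ρ,φ,τ) ≤ V(ρ,φ,τ) ≤ (1+ε) W₀(ρ,φ,τ) and 𝒟V(ρ,φ,τ) ≤ −κ τ^{−1} V(ρ,φ,τ). Then there exists δ ∈ (0,Δ₁) such that every solution (ρ(τ),φ(τ)) on [τ₁,∞) with W₀(ρ(τ₁),φ(τ₁),τ₁) ≤ δ² satisfies W₀(ρ(τ),φ(τ),τ₁) ≤ Δ₁² for all τ ≥ τ₁ and, moreover, W₀(ρ(τ),φ(τ),τ₁) ≤ ((1+ε)/(1−ε)) δ² (τ/τ₁)^{L/N − κ} for all τ ≥ τ₁; in particular (ρ(τ),φ(τ)) → (0,0) as τ → ∞ (polynomial stability of the zero solution). -/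
open Real

/-- `W₀(ρ,φ,τ) = (Q ρ² + τ^{−L/N} λ₀ φ²)/2`. -/
noncomputable def W0 (Q lam0 : ℝ) (N L : ℕ) (ρ φ τ : ℝ) : ℝ :=
  (Q * ρ ^ 2 + τ ^ (-(L : ℝ) / (N : ℝ)) * lam0 * φ ^ 2) / 2

/-- Derivative of `V` along the system `dρ/dτ = τ^{−M/N} A(ρ,φ,τ)`,
`dφ/dτ = τ^{−M/N} B(ρ,φ,τ)`:
`𝒟V = ∂_τV + τ^{−M/N}(A ∂_ρV + B ∂_φV)`. -/
noncomputable def DV (N M : ℕ) (A B V : ℝ → ℝ → ℝ → ℝ) (ρ φ τ : ℝ) : ℝ :=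
  deriv (fun t => V ρ φ t) τ +
    τ ^ (-(M : ℝ) / (N : ℝ)) *
      (A ρ φ τ * deriv (fun r => V r φ τ) ρ + B ρ φ τ * deriv (fun p => V ρ p τ) φ)

/-- A solution on `[τ₁,∞)` of the planar system
`dρ/dτ = τ^{−M/N} A(ρ,φ,τ)`, `dφ/dτ = τ^{−M/N} B(ρ,φ,τ)`. -/
def IsSolution (N M : ℕ) (A B : ℝ → ℝ → ℝ → ℝ) (τ₁ : ℝ) (ρ φ : ℝ → ℝ) : Prop :=
  ∀ τ ≥ τ₁, HasDerivAt ρ (τ ^ (-(M : ℝ) / (N : ℝ)) * A (ρ τ) (φ τ) τ) τ ∧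
    HasDerivAt φ (τ ^ (-(M : ℝ) / (N : ℝ)) * B (ρ τ) (φ τ) τ) τ

open Set Filter Topology

/-!
While the trajectory stays in the region `W₀(·,·,τ₁) ≤ Δ₁²`, the decay inequality
`𝒟V ≤ −κ τ⁻¹ V` makes `τ ↦ V(ρ(τ),φ(τ),τ) τ^κ` nonincreasing. The sandwich
`(1−ε)W₀ ≤ V ≤ (1+ε)W₀` and `W₀(·,·,τ₁) ≤ (τ/τ₁)^{L/N} W₀(·,·,τ)` turn this into the polynomial
bound, which for `((1+ε)/(1−ε)) δ² = Δ₁²/2` keeps the trajectory strictly inside the region;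
a first-exit-time argument then shows that it never leaves it.
-/

theorem hasDerivAt_comp_of_differentiableAt_uncurry₃ {V : ℝ → ℝ → ℝ → ℝ} {x y : ℝ → ℝ}
    {t x' y' : ℝ} (hV : DifferentiableAt ℝ (fun p : ℝ × ℝ × ℝ => V p.1 p.2.1 p.2.2) (x t, y t, t))
    (hx : HasDerivAt x x' t) (hy : HasDerivAt y y' t) :
    HasDerivAt (fun s => V (x s) (y s) s)
      (deriv (fun s => V (x t) (y t) s) t + x' * deriv (fun r => V r (y t) t) (x t) +
        y' * deriv (fun p => V (x t) p t) (y t)) t := by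
  have hL := hV.hasFDerivAt
  set L := fderiv ℝ (fun p : ℝ × ℝ × ℝ => V p.1 p.2.1 p.2.2) (x t, y t, t)
  have hτ : deriv (fun s => V (x t) (y t) s) t = L (0, 0, 1) :=
    (hL.comp_hasDerivAt t (f := fun s => (x t, y t, s))
      ((hasDerivAt_const t _).prodMk ((hasDerivAt_const t _).prodMk (hasDerivAt_id t)))).deriv
  have hρ : deriv (fun r => V r (y t) t) (x t) = L (1, 0, 0) :=
    (hL.comp_hasDerivAt (x t) (f := fun r => (r, y t, t))
      ((hasDerivAt_id _).prodMk ((hasDerivAt_const _ _).prodMk (hasDerivAt_const _ _)))).deriv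
  have hφ : deriv (fun p => V (x t) p t) (y t) = L (0, 1, 0) :=
    (hL.comp_hasDerivAt (y t) (f := fun p => (x t, p, t))
      ((hasDerivAt_const _ _).prodMk ((hasDerivAt_id _).prodMk (hasDerivAt_const _ _)))).deriv
  have hvec : ((x', y', 1) : ℝ × ℝ × ℝ) = (0, 0, 1) + x' • (1, 0, 0) + y' • (0, 1, 0) := by
    ext <;> simp
  rw [hτ, hρ, hφ, ← smul_eq_mul x', ← smul_eq_mul y', ← L.map_smul, ← L.map_smul, ← map_add,
    ← map_add, ← hvec]
  exact hL.comp_hasDerivAt t (hx.prodMk (hy.prodMk (hasDerivAt_id t)))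

theorem mul_rpow_le_of_hasDerivAt_le_neg_mul_inv {E E' : ℝ → ℝ} {a b κ : ℝ} (ha : 0 < a)
    (hab : a ≤ b) (hE : ∀ s ∈ Icc a b, HasDerivAt E (E' s) s)
    (hE' : ∀ s ∈ Icc a b, E' s ≤ -κ * s⁻¹ * E s) :
    E b * b ^ κ ≤ E a * a ^ κ := by
  have hH : ∀ s ∈ Icc a b,
      HasDerivAt (fun s => E s * s ^ κ) (E' s * s ^ κ + E s * (κ * s ^ (κ - 1))) s :=
    fun s hs => (hE s hs).mul (hasDerivAt_rpow_const (Or.inl (ha.trans_le hs.1).ne'))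
  have hanti : AntitoneOn (fun s => E s * s ^ κ) (Icc a b) := by
    refine antitoneOn_of_hasDerivWithinAt_nonpos (convex_Icc a b)
      (f' := fun s => E' s * s ^ κ + E s * (κ * s ^ (κ - 1)))
      (fun s hs => (hH s hs).continuousAt.continuousWithinAt) (fun s hs => ?_) (fun s hs => ?_)
    all_goals rw [interior_Icc] at hs
    · exact (hH s (Ioo_subset_Icc_self hs)).hasDerivWithinAt
    · have hs0 : 0 < s := ha.trans hs.1
      calc E' s * s ^ κ + E s * (κ * s ^ (κ - 1))
          = (E' s - -κ * s⁻¹ * E s) * s ^ κ := by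
            rw [rpow_sub_one hs0.ne']
            ring
        _ ≤ 0 := mul_nonpos_of_nonpos_of_nonneg
            (sub_nonpos.2 (hE' s (Ioo_subset_Icc_self hs))) (rpow_nonneg hs0.le κ)
  exact hanti (left_mem_Icc.2 hab) (right_mem_Icc.2 hab) hab

theorem le_of_forall_Icc_le_imp_lt {g : ℝ → ℝ} {a c : ℝ} (hg : ContinuousOn g (Ici a))
    (ha : g a ≤ c) (hstep : ∀ t ≥ a, (∀ s ∈ Icc a t, g s ≤ c) → g t < c) :
    ∀ t ≥ a, g t ≤ c := by
  by_contra! ⟨t₀, ht₀, hct₀⟩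
  have hK : IsClosed (Icc a t₀ ∩ g ⁻¹' Ici c) :=
    (hg.mono Icc_subset_Ici_self).preimage_isClosed_of_isClosed isClosed_Icc isClosed_Ici
  -- `u` is the first time in `[a, t₀]` at which `g` reaches `c`
  obtain ⟨u, ⟨⟨hau, hut₀⟩, hcu⟩, hmin⟩ := (isCompact_Icc.of_isClosed_subset hK inter_subset_left)
    |>.exists_isLeast ⟨t₀, ⟨ht₀, le_rfl⟩, hct₀.le⟩
  have hga : g a < c := hstep a le_rfl (by simpa using ha)
  have hau' : a < u := hau.lt_of_ne (by rintro rfl; exact (hcu.trans_lt hga).false)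
  have hbefore : ∀ s ∈ Ico a u, g s ≤ c := fun s hs => not_lt.1 fun hs' =>
    (hmin ⟨⟨hs.1, hs.2.le.trans hut₀⟩, hs'.le⟩).not_gt hs.2
  have hupto : ∀ s ∈ Icc a u, g s ≤ c := by
    rw [← closure_Ico hau'.ne]
    exact le_on_closure hbefore
      ((hg.mono Icc_subset_Ici_self).mono (closure_Ico hau'.ne).subset) continuousOn_const
  exact (hstep u hau hupto).not_ge hcu

theorem tendsto_zero_of_mul_sq_le {α : Type*} {l : Filter α} {x w : α → ℝ} {c : ℝ} (hc : 0 < c)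
    (hle : ∀ t, c * x t ^ 2 ≤ w t) (hw : Tendsto w l (𝓝 0)) : Tendsto x l (𝓝 0) := by
  have hsqrt : Tendsto (fun t => √(w t / c)) l (𝓝 0) := by
    simpa using (hw.div_const c).sqrt
  refine squeeze_zero_norm (fun t => ?_) hsqrt
  rw [Real.norm_eq_abs]
  exact abs_le_sqrt ((le_div_iff₀ hc).2 (by linarith [hle t]))

section W0

variable {Q lam0 : ℝ} {N L : ℕ}

theorem W0_nonneg (hQ : 0 ≤ Q) (hlam0 : 0 ≤ lam0) (ρ φ : ℝ) {τ : ℝ} (hτ : 0 ≤ τ) :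
    0 ≤ W0 Q lam0 N L ρ φ τ := by
  unfold W0
  positivity

theorem W0_le_rpow_mul_W0 (hQ : 0 ≤ Q) (ρ φ : ℝ) {σ τ : ℝ} (hσ : 0 < σ) (hστ : σ ≤ τ) :
    W0 Q lam0 N L ρ φ σ ≤ (τ / σ) ^ ((L : ℝ) / N) * W0 Q lam0 N L ρ φ τ := by
  have hτ : 0 < τ := hσ.trans_le hστ
  have hr : 1 ≤ (τ / σ) ^ ((L : ℝ) / N) :=
    one_le_rpow ((one_le_div hσ).2 hστ) (by positivity)
  have hσpow : σ ^ (-(L : ℝ) / N) = (τ / σ) ^ ((L : ℝ) / N) * τ ^ (-(L : ℝ) / N) := by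
    rw [neg_div, rpow_neg hσ.le, rpow_neg hτ.le, div_rpow hτ.le hσ.le]
    have : 0 < τ ^ ((L : ℝ) / N) := rpow_pos_of_pos hτ _
    field_simp
  unfold W0
  rw [hσpow]
  nlinarith [mul_le_mul_of_nonneg_right hr (mul_nonneg hQ (sq_nonneg ρ))]

theorem tendsto_zero_of_tendsto_W0 (hQ : 0 < Q) (hlam0 : 0 < lam0) {τ : ℝ} (hτ : 0 < τ)
    {α : Type*} {l : Filter α} {ρ φ : α → ℝ}
    (h : Tendsto (fun t => W0 Q lam0 N L (ρ t) (φ t) τ) l (𝓝 0)) :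
    Tendsto (fun t => (ρ t, φ t)) l (𝓝 (0, 0)) := by
  have hc : 0 < τ ^ (-(L : ℝ) / N) * lam0 / 2 := by positivity
  refine (tendsto_zero_of_mul_sq_le (half_pos hQ) (fun t => ?_) h).prodMk_nhds
    (tendsto_zero_of_mul_sq_le hc (fun t => ?_) h)
  all_goals
    unfold W0
    nlinarith [mul_nonneg hQ.le (sq_nonneg (ρ t)), mul_nonneg hc.le (sq_nonneg (φ t))]

end W0

namespace IsSolution

variable {N M : ℕ} {A B : ℝ → ℝ → ℝ → ℝ} {τ₁ : ℝ} {ρ φ : ℝ → ℝ}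

theorem continuousOn_W0 (hsol : IsSolution N M A B τ₁ ρ φ) (Q lam0 : ℝ) (L : ℕ) (σ : ℝ) :
    ContinuousOn (fun t => W0 Q lam0 N L (ρ t) (φ t) σ) (Ici τ₁) := by
  have hρ : ContinuousOn ρ (Ici τ₁) := fun t ht => (hsol t ht).1.continuousAt.continuousWithinAt
  have hφ : ContinuousOn φ (Ici τ₁) := fun t ht => (hsol t ht).2.continuousAt.continuousWithinAt
  unfold W0
  fun_prop

theorem hasDerivAt_DV (hsol : IsSolution N M A B τ₁ ρ φ) {V : ℝ → ℝ → ℝ → ℝ}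
    (hV : Differentiable ℝ fun p : ℝ × ℝ × ℝ => V p.1 p.2.1 p.2.2) {τ : ℝ} (hτ : τ₁ ≤ τ) :
    HasDerivAt (fun s => V (ρ s) (φ s) s) (DV N M A B V (ρ τ) (φ τ) τ) τ := by
  convert hasDerivAt_comp_of_differentiableAt_uncurry₃ (hV _) (hsol τ hτ).1 (hsol τ hτ).2 using 1
  unfold DV
  ring

theorem W0_le_of_forall_Icc {L : ℕ} {V : ℝ → ℝ → ℝ → ℝ} {Q lam0 Δ₁ ε κ : ℝ}
    (hsol : IsSolution N M A B τ₁ ρ φ) (hQ : 0 ≤ Q)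
    (hτ₁ : 0 < τ₁) (hε : ε < 1)
    (hV : Differentiable ℝ fun p : ℝ × ℝ × ℝ => V p.1 p.2.1 p.2.2)
    (hsand : ∀ τ ≥ τ₁, ∀ ρ φ : ℝ, W0 Q lam0 N L ρ φ τ₁ ≤ Δ₁ ^ 2 →
      (1 - ε) * W0 Q lam0 N L ρ φ τ ≤ V ρ φ τ ∧ V ρ φ τ ≤ (1 + ε) * W0 Q lam0 N L ρ φ τ)
    (hdecay : ∀ τ ≥ τ₁, ∀ ρ φ : ℝ, W0 Q lam0 N L ρ φ τ₁ ≤ Δ₁ ^ 2 →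
      DV N M A B V ρ φ τ ≤ -κ * τ⁻¹ * V ρ φ τ)
    {t : ℝ} (ht : τ₁ ≤ t) (hreg : ∀ s ∈ Icc τ₁ t, W0 Q lam0 N L (ρ s) (φ s) τ₁ ≤ Δ₁ ^ 2) :
    W0 Q lam0 N L (ρ t) (φ t) τ₁ ≤
      (1 + ε) / (1 - ε) * W0 Q lam0 N L (ρ τ₁) (φ τ₁) τ₁ * (t / τ₁) ^ ((L : ℝ) / N - κ) := by
  set E : ℝ → ℝ := fun s => V (ρ s) (φ s) s
  set r := t / τ₁
  have ht0 : 0 < t := hτ₁.trans_le ht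
  have hr : 0 < r := div_pos ht0 hτ₁
  have hε' : 0 < 1 - ε := sub_pos.2 hε
  have hlower : (1 - ε) * W0 Q lam0 N L (ρ t) (φ t) t ≤ E t :=
    (hsand t ht _ _ (hreg t ⟨ht, le_rfl⟩)).1
  have hupper : E τ₁ ≤ (1 + ε) * W0 Q lam0 N L (ρ τ₁) (φ τ₁) τ₁ :=
    (hsand τ₁ le_rfl _ _ (hreg τ₁ ⟨le_rfl, ht⟩)).2
  have hdecrease : E t ≤ E τ₁ * r ^ (-κ) := by
    have h := mul_rpow_le_of_hasDerivAt_le_neg_mul_inv hτ₁ ht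
      (fun s hs => hsol.hasDerivAt_DV hV hs.1) (fun s hs => hdecay s hs.1 _ _ (hreg s hs))
    rwa [rpow_neg hr.le, div_rpow ht0.le hτ₁.le, inv_div, ← mul_div_assoc,
      le_div_iff₀ (rpow_pos_of_pos ht0 κ)]
  calc W0 Q lam0 N L (ρ t) (φ t) τ₁
      ≤ r ^ ((L : ℝ) / N) * W0 Q lam0 N L (ρ t) (φ t) t := W0_le_rpow_mul_W0 hQ _ _ hτ₁ ht
    _ ≤ r ^ ((L : ℝ) / N) * (E t / (1 - ε)) := by
        gcongr
        rw [le_div_iff₀ hε']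
        linarith
    _ ≤ r ^ ((L : ℝ) / N) * ((1 + ε) * W0 Q lam0 N L (ρ τ₁) (φ τ₁) τ₁ * r ^ (-κ) / (1 - ε)) := by
        gcongr
        exact hdecrease.trans (by gcongr)
    _ = (1 + ε) / (1 - ε) * W0 Q lam0 N L (ρ τ₁) (φ τ₁) τ₁ * r ^ ((L : ℝ) / N - κ) := by
        rw [rpow_sub hr, rpow_neg hr.le]
        ring

end IsSolution

theorem exists_lt_and_div_mul_sq_eq_half {Δ ε : ℝ} (hΔ : 0 < Δ) (hε0 : 0 ≤ ε) (hε1 : ε < 1) :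
    ∃ δ, 0 < δ ∧ δ < Δ ∧ (1 + ε) / (1 - ε) * δ ^ 2 = Δ ^ 2 / 2 := by
  have hq : 0 < (1 - ε) / (2 * (1 + ε)) := div_pos (by linarith) (by linarith)
  refine ⟨Δ * √((1 - ε) / (2 * (1 + ε))), mul_pos hΔ (sqrt_pos.2 hq),
    mul_lt_of_lt_one_right hΔ ((sqrt_lt' one_pos).2 ?_), ?_⟩
  · rw [one_pow, div_lt_one (by linarith)]
    linarith
  · have h1ε : 1 - ε ≠ 0 := by linarith
    rw [mul_pow, sq_sqrt hq.le]
    field_simp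

theorem statement9_general (Q lam0 : ℝ) (hQ : 0 < Q) (hlam0 : 0 < lam0)
    (N M L : ℕ)
    (τ₁ : ℝ) (hτ₁ : 1 ≤ τ₁)
    (A B : ℝ → ℝ → ℝ → ℝ)
    (Δ₁ ε κ : ℝ) (hΔ₁ : 0 < Δ₁) (hε : ε ∈ Set.Ioo (0 : ℝ) 1) (hκ : (L : ℝ) / (N : ℝ) < κ)
    (V : ℝ → ℝ → ℝ → ℝ)
    (hV : ContDiff ℝ 1 fun p : ℝ × ℝ × ℝ => V p.1 p.2.1 p.2.2)
    (hsand : ∀ τ ≥ τ₁, ∀ ρ φ : ℝ, W0 Q lam0 N L ρ φ τ₁ ≤ Δ₁ ^ 2 →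
      (1 - ε) * W0 Q lam0 N L ρ φ τ ≤ V ρ φ τ ∧ V ρ φ τ ≤ (1 + ε) * W0 Q lam0 N L ρ φ τ)
    (hdecay : ∀ τ ≥ τ₁, ∀ ρ φ : ℝ, W0 Q lam0 N L ρ φ τ₁ ≤ Δ₁ ^ 2 →
      DV N M A B V ρ φ τ ≤ -κ * τ⁻¹ * V ρ φ τ) :
    ∃ δ : ℝ, 0 < δ ∧ δ < Δ₁ ∧
      ∀ ρ φ : ℝ → ℝ, IsSolution N M A B τ₁ ρ φ →
        W0 Q lam0 N L (ρ τ₁) (φ τ₁) τ₁ ≤ δ ^ 2 →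
        (∀ τ ≥ τ₁, W0 Q lam0 N L (ρ τ) (φ τ) τ₁ ≤ Δ₁ ^ 2) ∧
        (∀ τ ≥ τ₁, W0 Q lam0 N L (ρ τ) (φ τ) τ₁ ≤
          ((1 + ε) / (1 - ε)) * δ ^ 2 * (τ / τ₁) ^ ((L : ℝ) / (N : ℝ) - κ)) ∧
        Filter.Tendsto (fun τ => (ρ τ, φ τ)) Filter.atTop (nhds (0, 0)) := by
  obtain ⟨hε0, hε1⟩ := hε
  have hτ₁0 : 0 < τ₁ := one_pos.trans_le hτ₁
  obtain ⟨δ, hδ0, hδΔ₁, hδ⟩ := exists_lt_and_div_mul_sq_eq_half hΔ₁ hε0.le hε1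
  refine ⟨δ, hδ0, hδΔ₁, fun ρ φ hsol hinit => ?_⟩
  have hbound : ∀ t ≥ τ₁, (∀ s ∈ Icc τ₁ t, W0 Q lam0 N L (ρ s) (φ s) τ₁ ≤ Δ₁ ^ 2) →
      W0 Q lam0 N L (ρ t) (φ t) τ₁ ≤ (1 + ε) / (1 - ε) * δ ^ 2 * (t / τ₁) ^ ((L : ℝ) / N - κ) :=
    fun t ht hreg => (hsol.W0_le_of_forall_Icc hQ.le hτ₁0 hε1 (hV.differentiable one_ne_zero)
      hsand hdecay ht hreg).trans
      (by gcongr; exact rpow_nonneg (div_nonneg (hτ₁0.le.trans ht) hτ₁0.le) _)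
  have hregion : ∀ t ≥ τ₁, W0 Q lam0 N L (ρ t) (φ t) τ₁ ≤ Δ₁ ^ 2 := by
    refine le_of_forall_Icc_le_imp_lt (hsol.continuousOn_W0 Q lam0 L τ₁)
      (hinit.trans (pow_le_pow_left₀ (by positivity) hδΔ₁.le 2)) fun t ht hreg => ?_
    calc W0 Q lam0 N L (ρ t) (φ t) τ₁
        ≤ (1 + ε) / (1 - ε) * δ ^ 2 * (t / τ₁) ^ ((L : ℝ) / N - κ) := hbound t ht hreg
      _ ≤ (1 + ε) / (1 - ε) * δ ^ 2 :=
        mul_le_of_le_one_right (by positivity)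
          (rpow_le_one_of_one_le_of_nonpos ((one_le_div hτ₁0).2 ht) (by linarith))
      _ < Δ₁ ^ 2 := by rw [hδ]; linarith [pow_pos hΔ₁ 2]
  have hdecay_rate : Tendsto (fun t => (1 + ε) / (1 - ε) * δ ^ 2 * (t / τ₁) ^ ((L : ℝ) / N - κ))
      atTop (𝓝 0) := by
    rw [← neg_sub]
    simpa using ((tendsto_rpow_neg_atTop (sub_pos.2 hκ)).comp
      (tendsto_id.atTop_div_const hτ₁0)).const_mul ((1 + ε) / (1 - ε) * δ ^ 2)
  have hW0 : Tendsto (fun t => W0 Q lam0 N L (ρ t) (φ t) τ₁) atTop (𝓝 0) := by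
    refine squeeze_zero' (Eventually.of_forall fun t => W0_nonneg hQ.le hlam0.le _ _ hτ₁0.le) ?_
      hdecay_rate
    filter_upwards [eventually_ge_atTop τ₁] with t ht
    exact hbound t ht fun s hs => hregion s hs.1
  exact ⟨hregion, fun t ht => hbound t ht fun s hs => hregion s hs.1,
    tendsto_zero_of_tendsto_W0 hQ hlam0 hτ₁0 hW0⟩

/-- polynomial stability, case `γ_D < 0`, `M + D = N`: If the Lyapunov
function `V` is sandwiched between `(1±ε) W₀` and satisfies
`𝒟V ≤ −κ τ⁻¹ V` on the region `{W₀(·,·,τ₁) ≤ Δ₁²}`, then there is `δ ∈ (0,Δ₁)`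
such that every solution starting with `W₀ ≤ δ²` stays in the region and obeys the
polynomial bound `W₀(ρ(τ),φ(τ),τ₁) ≤ ((1+ε)/(1−ε)) δ² (τ/τ₁)^{L/N − κ}`;
in particular `(ρ(τ),φ(τ)) → (0,0)`. -/
theorem statement9 (Q lam0 : ℝ) (hQ : 0 < Q) (hlam0 : 0 < lam0)
    (N M D L : ℕ) (hN : 1 ≤ N) (hM : 1 ≤ M) (hMD : M ≤ D) (hMDN : M + D = N)
    (τ₁ : ℝ) (hτ₁ : 1 ≤ τ₁)
    (A B : ℝ → ℝ → ℝ → ℝ)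
    (hA : Continuous fun p : ℝ × ℝ × ℝ => A p.1 p.2.1 p.2.2)
    (hB : Continuous fun p : ℝ × ℝ × ℝ => B p.1 p.2.1 p.2.2)
    (hA0 : ∀ τ ≥ τ₁, A 0 0 τ = 0) (hB0 : ∀ τ ≥ τ₁, B 0 0 τ = 0)
    (Δ₁ ε κ : ℝ) (hΔ₁ : 0 < Δ₁) (hε : ε ∈ Set.Ioo (0 : ℝ) 1) (hκ : (L : ℝ) / (N : ℝ) < κ)
    (V : ℝ → ℝ → ℝ → ℝ)
    (hV : ContDiff ℝ 1 fun p : ℝ × ℝ × ℝ => V p.1 p.2.1 p.2.2)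
    (hsand : ∀ τ ≥ τ₁, ∀ ρ φ : ℝ, W0 Q lam0 N L ρ φ τ₁ ≤ Δ₁ ^ 2 →
      (1 - ε) * W0 Q lam0 N L ρ φ τ ≤ V ρ φ τ ∧ V ρ φ τ ≤ (1 + ε) * W0 Q lam0 N L ρ φ τ)
    (hdecay : ∀ τ ≥ τ₁, ∀ ρ φ : ℝ, W0 Q lam0 N L ρ φ τ₁ ≤ Δ₁ ^ 2 →
      DV N M A B V ρ φ τ ≤ -κ * τ⁻¹ * V ρ φ τ) :
    ∃ δ : ℝ, 0 < δ ∧ δ < Δ₁ ∧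
      ∀ ρ φ : ℝ → ℝ, IsSolution N M A B τ₁ ρ φ →
        W0 Q lam0 N L (ρ τ₁) (φ τ₁) τ₁ ≤ δ ^ 2 →
        (∀ τ ≥ τ₁, W0 Q lam0 N L (ρ τ) (φ τ) τ₁ ≤ Δ₁ ^ 2) ∧
        (∀ τ ≥ τ₁, W0 Q lam0 N L (ρ τ) (φ τ) τ₁ ≤
          ((1 + ε) / (1 - ε)) * δ ^ 2 * (τ / τ₁) ^ ((L : ℝ) / (N : ℝ) - κ)) ∧
        Filter.Tendsto (fun τ => (ρ τ, φ τ)) Filter.atTop (nhds (0, 0)) :=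
  statement9_general Q lam0 hQ hlam0 N M L τ₁ hτ₁ A B Δ₁ ε κ hΔ₁ hε hκ V hV hsand hdecay
end

section
/- Let N ≥ 1, M ≥ 1 and L ≥ 1 be integers, and let Δ₁ > 0, ε ∈ (0,1). Suppose V : ℝ² × [τ₁,∞) → ℝ is C¹ and for every τ ≥ τ₁ and every (ρ,φ) with W₀(ρ,φ,τ₁) ≤ Δ₁² one has (1−ε) W₀(ρ,φ,τ) ≤ V(ρ,φ,τ) ≤ (1+ε) W₀(ρ,φ,τ) and 𝒟V(ρ,φ,τ) ≤ 0. For δ ∈ (0,Δ₁) set Δ_δ = δ ((1−ε)/(1+ε))^{1/2} τ₁^{−L/(2N)} and Γ_δ = (Δ₁/δ)^{2N/L}. Then every solution (ρ(τ),φ(τ)) with W₀(ρ(τ₁),φ(τ₁),τ₁) ≤ Δ_δ² satisfies, for all τ ∈ [τ₁, Γ_δ τ₁]: W₀(ρ(τ),φ(τ),τ₁) ≤ Δ₁² and W₀(ρ(τ),φ(τ),τ/τ₁) ≤ δ². Since Γ_δ → ∞ as δ → 0, the zero solution is stable on a finite but asymptotically long time interval. -/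
/-!
Along a solution, `𝒟V ≤ 0` makes `V` nonincreasing for as long as the solution stays in the
region `W₀(·,·,τ₁) ≤ Δ₁²`, and the sandwich `(1 ± ε) W₀` then gives
`W₀(ρ(τ),φ(τ),τ) ≤ (1+ε)/(1-ε) · Δ_δ² = δ² τ₁^{-L/N}` there. Since
`W₀(·,·,τ₁) ≤ (τ/τ₁)^{L/N} W₀(·,·,τ)`, this keeps `W₀(ρ(τ),φ(τ),τ₁)` strictly below `Δ₁²`
for `τ < Γ_δ τ₁`, so by continuous induction the solution never leaves the region on
`[τ₁, Γ_δ τ₁]`. The second bound is `W₀(·,·,τ/τ₁) ≤ τ₁^{L/N} W₀(·,·,τ) ≤ δ²`.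
-/

open Real

open Set

theorem Icc_subset_setOf_le_of_forall_lt {α β : Type*} [ConditionallyCompleteLinearOrder α]
    [TopologicalSpace α] [OrderTopology α] [DenselyOrdered α] [LinearOrder β]
    [TopologicalSpace β] [OrderClosedTopology β] {f : α → β} {a b : α} {c : β}
    (hf : ∀ t ∈ Icc a b, ContinuousAt f t) (ha : f a ≤ c)
    (hstep : ∀ t ∈ Ico a b, (∀ s ∈ Icc a t, f s ≤ c) → f t < c) :
    Icc a b ⊆ {t | f t ≤ c} := by
  have hclosed : IsClosed ({t | f t ≤ c} ∩ Icc a b) := by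
    rw [inter_comm]
    exact ContinuousOn.preimage_isClosed_of_isClosed
      (fun t ht => (hf t ht).continuousWithinAt) isClosed_Icc isClosed_Iic
  refine hclosed.Icc_subset_of_forall_mem_nhdsGT_of_Icc_subset ha fun t ht hprefix => ?_
  have hlt : f t < c := hstep t ht hprefix
  exact nhdsWithin_le_nhds <|
    ((hf t (Ico_subset_Icc_self ht)).eventually (isOpen_Iio.mem_nhds hlt)).mono fun _ => le_of_lt

theorem hasDerivAt_comp_curve {V : ℝ → ℝ → ℝ → ℝ} {ρ φ : ℝ → ℝ} {ρ' φ' t : ℝ}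
    (hV : DifferentiableAt ℝ (fun p : ℝ × ℝ × ℝ => V p.1 p.2.1 p.2.2) (ρ t, φ t, t))
    (hρ : HasDerivAt ρ ρ' t) (hφ : HasDerivAt φ φ' t) :
    HasDerivAt (fun s => V (ρ s) (φ s) s)
      (ρ' * deriv (fun r => V r (φ t) t) (ρ t) + φ' * deriv (fun y => V (ρ t) y t) (φ t)
        + deriv (fun s => V (ρ t) (φ t) s) t) t := by
  set D := fderiv ℝ (fun p : ℝ × ℝ × ℝ => V p.1 p.2.1 p.2.2) (ρ t, φ t, t)
  have hF := hV.hasFDerivAt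
  have h₁ : HasDerivAt (fun r => V r (φ t) t) (D (1, 0, 0)) (ρ t) :=
    (hF.comp_hasDerivAt (ρ t) (HasDerivAt.prodMk (hasDerivAt_id (ρ t))
      (HasDerivAt.prodMk (hasDerivAt_const _ (φ t)) (hasDerivAt_const _ t))) :)
  have h₂ : HasDerivAt (fun y => V (ρ t) y t) (D (0, 1, 0)) (φ t) :=
    (hF.comp_hasDerivAt (φ t) (HasDerivAt.prodMk (hasDerivAt_const _ (ρ t))
      (HasDerivAt.prodMk (hasDerivAt_id (φ t)) (hasDerivAt_const _ t))) :)
  have h₃ : HasDerivAt (fun s => V (ρ t) (φ t) s) (D (0, 0, 1)) t :=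
    (hF.comp_hasDerivAt t (HasDerivAt.prodMk (hasDerivAt_const _ (ρ t))
      (HasDerivAt.prodMk (hasDerivAt_const _ (φ t)) (hasDerivAt_id t))) :)
  have hsplit : ((ρ', φ', 1) : ℝ × ℝ × ℝ) = ρ' • (1, 0, 0) + φ' • (0, 1, 0) + (0, 0, 1) := by
    simp
  rw [h₁.deriv, h₂.deriv, h₃.deriv, ← smul_eq_mul, ← smul_eq_mul, ← map_smul, ← map_smul,
    ← map_add, ← map_add, ← hsplit]
  exact hF.comp_hasDerivAt t (HasDerivAt.prodMk hρ (HasDerivAt.prodMk hφ (hasDerivAt_id t)))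

theorem IsSolution.hasDerivAt_DV_s12 {N M : ℕ} {A B V : ℝ → ℝ → ℝ → ℝ} {τ₁ : ℝ} {ρ φ : ℝ → ℝ}
    (hsol : IsSolution N M A B τ₁ ρ φ)
    (hV : Differentiable ℝ fun p : ℝ × ℝ × ℝ => V p.1 p.2.1 p.2.2) {t : ℝ} (ht : τ₁ ≤ t) :
    HasDerivAt (fun s => V (ρ s) (φ s) s) (DV N M A B V (ρ t) (φ t) t) t := by
  convert hasDerivAt_comp_curve (hV _) (hsol t ht).1 (hsol t ht).2 using 1
  rw [DV]
  ring

theorem IsSolution.antitoneOn {N M : ℕ} {A B V : ℝ → ℝ → ℝ → ℝ} {τ₁ T : ℝ} {ρ φ : ℝ → ℝ}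
    (hsol : IsSolution N M A B τ₁ ρ φ)
    (hV : Differentiable ℝ fun p : ℝ × ℝ × ℝ => V p.1 p.2.1 p.2.2)
    (hdecay : ∀ t ∈ Icc τ₁ T, DV N M A B V (ρ t) (φ t) t ≤ 0) :
    AntitoneOn (fun s => V (ρ s) (φ s) s) (Icc τ₁ T) := by
  have hderiv : ∀ t ∈ Icc τ₁ T, HasDerivAt (fun s => V (ρ s) (φ s) s)
      (DV N M A B V (ρ t) (φ t) t) t := fun t ht => hsol.hasDerivAt_DV_s12 hV ht.1
  refine antitoneOn_of_hasDerivWithinAt_nonpos (convex_Icc τ₁ T)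
    (fun t ht => (hderiv t ht).continuousAt.continuousWithinAt) (fun t ht => ?_)
    (fun t ht => hdecay t (interior_subset ht))
  exact (hderiv t (interior_subset ht)).hasDerivWithinAt

theorem W0_le_rpow_mul_W0_s12 {Q : ℝ} (hQ : 0 ≤ Q) (lam0 : ℝ) (N L : ℕ) (a b : ℝ) {s t : ℝ}
    (hs : 0 < s) (hst : s ≤ t) :
    W0 Q lam0 N L a b s ≤ (t / s) ^ ((L : ℝ) / N) * W0 Q lam0 N L a b t := by
  have ht : 0 < t := hs.trans_le hst
  have hscale : (t / s) ^ ((L : ℝ) / N) * t ^ (-(L : ℝ) / N) = s ^ (-(L : ℝ) / N) := by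
    rw [neg_div, rpow_neg ht.le, rpow_neg hs.le, div_rpow ht.le hs.le]
    field_simp
  have hone : 1 ≤ (t / s) ^ ((L : ℝ) / N) :=
    one_le_rpow ((one_le_div hs).mpr hst) (by positivity)
  have hQa : Q * a ^ 2 ≤ (t / s) ^ ((L : ℝ) / N) * (Q * a ^ 2) :=
    le_mul_of_one_le_left (by positivity) hone
  calc W0 Q lam0 N L a b s ≤ ((t / s) ^ ((L : ℝ) / N) * (Q * a ^ 2)
        + s ^ (-(L : ℝ) / N) * lam0 * b ^ 2) / 2 := by
        rw [W0]; linarith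
    _ = (t / s) ^ ((L : ℝ) / N) * W0 Q lam0 N L a b t := by
        rw [W0, ← hscale]; ring

theorem W0_div_le_rpow_mul_W0 {Q : ℝ} (hQ : 0 ≤ Q) (lam0 : ℝ) (N L : ℕ) (a b : ℝ) {s t : ℝ}
    (hs : 1 ≤ s) (ht : 0 < t) :
    W0 Q lam0 N L a b (t / s) ≤ s ^ ((L : ℝ) / N) * W0 Q lam0 N L a b t := by
  have h := W0_le_rpow_mul_W0_s12 hQ lam0 N L a b (div_pos ht (by linarith)) (div_le_self ht.le hs)
  rwa [div_div_cancel₀ (by positivity)] at h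

theorem one_add_mul_sq_initialRadius {δ ε τ₁ : ℝ} (L N : ℕ) (hε₀ : -1 < ε) (hε₁ : ε ≤ 1)
    (hτ₁ : 0 ≤ τ₁) :
    (1 + ε) * (δ * √((1 - ε) / (1 + ε)) * τ₁ ^ (-(L : ℝ) / (2 * N))) ^ 2
      = (1 - ε) * (δ ^ 2 * τ₁ ^ (-(L : ℝ) / N)) := by
  have hε : 0 < 1 + ε := by linarith
  rw [mul_pow, mul_pow, sq_sqrt (div_nonneg (by linarith) hε.le), ← rpow_mul_natCast hτ₁]
  have hexp : -(L : ℝ) / (2 * N) * ((2 : ℕ) : ℝ) = -(L : ℝ) / N := by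
    push_cast; ring
  rw [hexp]
  field_simp

theorem rpow_lt_sq_of_lt_rpow {x y : ℝ} {L N : ℕ} (hL : 1 ≤ L) (hN : 1 ≤ N) (hx : 0 ≤ x)
    (hy : 0 ≤ y) (h : x < y ^ (2 * (N : ℝ) / L)) : x ^ ((L : ℝ) / N) < y ^ 2 := by
  have hp : 0 < (L : ℝ) / N := by positivity
  have hy2 : y ^ (2 * (N : ℝ) / L) = (y ^ 2) ^ ((L : ℝ) / N)⁻¹ := by
    rw [← rpow_natCast, ← rpow_mul hy]
    congr 1
    field_simp
    push_cast
    ring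
  rw [hy2] at h
  exact (lt_rpow_inv_iff_of_pos hx (by positivity) hp).1 h

theorem IsSolution.sandwich_le_initial {N M : ℕ} {A B V W : ℝ → ℝ → ℝ → ℝ} {P : ℝ → ℝ → Prop}
    {τ₁ T t c d : ℝ} {ρ φ : ℝ → ℝ} (hsol : IsSolution N M A B τ₁ ρ φ)
    (hV : Differentiable ℝ fun p : ℝ × ℝ × ℝ => V p.1 p.2.1 p.2.2)
    (hsand : ∀ τ ≥ τ₁, ∀ ρ φ : ℝ, P ρ φ → c * W ρ φ τ ≤ V ρ φ τ ∧ V ρ φ τ ≤ d * W ρ φ τ)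
    (hdecay : ∀ τ ≥ τ₁, ∀ ρ φ : ℝ, P ρ φ → DV N M A B V ρ φ τ ≤ 0)
    (hP : ∀ s ∈ Icc τ₁ T, P (ρ s) (φ s)) (ht : t ∈ Icc τ₁ T) :
    c * W (ρ t) (φ t) t ≤ d * W (ρ τ₁) (φ τ₁) τ₁ := by
  have hτ₁ : τ₁ ∈ Icc τ₁ T := left_mem_Icc.2 (ht.1.trans ht.2)
  calc c * W (ρ t) (φ t) t ≤ V (ρ t) (φ t) t := (hsand t ht.1 _ _ (hP t ht)).1
    _ ≤ V (ρ τ₁) (φ τ₁) τ₁ :=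
        hsol.antitoneOn hV (fun s hs => hdecay s hs.1 _ _ (hP s hs)) hτ₁ ht ht.1
    _ ≤ d * W (ρ τ₁) (φ τ₁) τ₁ := (hsand τ₁ le_rfl _ _ (hP τ₁ hτ₁)).2

theorem IsSolution.Icc_subset_setOf_W0_le_sq {N M L : ℕ} {A B : ℝ → ℝ → ℝ → ℝ} {ρ φ : ℝ → ℝ}
    {Q lam0 τ₁ τ δ Δ₁ : ℝ} (hsol : IsSolution N M A B τ₁ ρ φ) (hQ : 0 ≤ Q) (hN : 1 ≤ N)
    (hL : 1 ≤ L) (hτ₁ : 1 ≤ τ₁) (hδ : 0 < δ) (hδΔ : δ < Δ₁)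
    (hτΓ : τ ≤ (Δ₁ / δ) ^ (2 * (N : ℝ) / L) * τ₁)
    (hstart : W0 Q lam0 N L (ρ τ₁) (φ τ₁) τ₁ ≤ δ ^ 2 * τ₁ ^ (-(L : ℝ) / N))
    (hW : ∀ T ∈ Icc τ₁ τ, (∀ s ∈ Icc τ₁ T, W0 Q lam0 N L (ρ s) (φ s) τ₁ ≤ Δ₁ ^ 2) →
      W0 Q lam0 N L (ρ T) (φ T) T ≤ δ ^ 2 * τ₁ ^ (-(L : ℝ) / N)) :
    Icc τ₁ τ ⊆ {t | W0 Q lam0 N L (ρ t) (φ t) τ₁ ≤ Δ₁ ^ 2} := by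
  have hτ₁0 : 0 < τ₁ := by linarith
  have hτe : τ₁ ^ (-(L : ℝ) / N) ≤ 1 :=
    rpow_le_one_of_one_le_of_nonpos hτ₁ (by rw [neg_div]; exact neg_nonpos.2 (by positivity))
  refine Icc_subset_setOf_le_of_forall_lt (fun t ht => ?_) ?_ (fun t ht hreg => ?_)
  · have hρ := (hsol t ht.1).1.continuousAt
    have hφ := (hsol t ht.1).2.continuousAt
    unfold W0
    fun_prop
  · calc W0 Q lam0 N L (ρ τ₁) (φ τ₁) τ₁ ≤ δ ^ 2 * τ₁ ^ (-(L : ℝ) / N) := hstart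
      _ ≤ δ ^ 2 := mul_le_of_le_one_right (by positivity) hτe
      _ ≤ Δ₁ ^ 2 := by gcongr
  · have ht0 : 0 < t := hτ₁0.trans_le ht.1
    calc W0 Q lam0 N L (ρ t) (φ t) τ₁
        ≤ (t / τ₁) ^ ((L : ℝ) / N) * W0 Q lam0 N L (ρ t) (φ t) t :=
          W0_le_rpow_mul_W0_s12 hQ _ _ _ _ _ hτ₁0 ht.1
      _ ≤ (t / τ₁) ^ ((L : ℝ) / N) * (δ ^ 2 * τ₁ ^ (-(L : ℝ) / N)) := by
          gcongr
          exact hW t (Ico_subset_Icc_self ht) hreg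
      _ < (Δ₁ / δ) ^ 2 * (δ ^ 2 * τ₁ ^ (-(L : ℝ) / N)) := by
          gcongr
          exact rpow_lt_sq_of_lt_rpow hL hN (by positivity)
            (div_nonneg (hδ.trans hδΔ).le hδ.le) ((div_lt_iff₀ hτ₁0).2 (ht.2.trans_le hτΓ))
      _ = Δ₁ ^ 2 * τ₁ ^ (-(L : ℝ) / N) := by field_simp
      _ ≤ Δ₁ ^ 2 := mul_le_of_le_one_right (by positivity) hτe

theorem statement12_general (Q lam0 : ℝ) (hQ : 0 < Q)
    (N M L : ℕ) (hN : 1 ≤ N) (hL : 1 ≤ L)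
    (τ₁ : ℝ) (hτ₁ : 1 ≤ τ₁)
    (A B : ℝ → ℝ → ℝ → ℝ)
    (Δ₁ ε : ℝ) (hε : ε ∈ Set.Ioo (0 : ℝ) 1)
    (V : ℝ → ℝ → ℝ → ℝ)
    (hV : ContDiff ℝ 1 fun p : ℝ × ℝ × ℝ => V p.1 p.2.1 p.2.2)
    (hsand : ∀ τ ≥ τ₁, ∀ ρ φ : ℝ, W0 Q lam0 N L ρ φ τ₁ ≤ Δ₁ ^ 2 →
      (1 - ε) * W0 Q lam0 N L ρ φ τ ≤ V ρ φ τ ∧ V ρ φ τ ≤ (1 + ε) * W0 Q lam0 N L ρ φ τ)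
    (hdecay : ∀ τ ≥ τ₁, ∀ ρ φ : ℝ, W0 Q lam0 N L ρ φ τ₁ ≤ Δ₁ ^ 2 →
      DV N M A B V ρ φ τ ≤ 0) :
    ∀ δ : ℝ, 0 < δ → δ < Δ₁ →
      ∀ ρ φ : ℝ → ℝ, IsSolution N M A B τ₁ ρ φ →
        W0 Q lam0 N L (ρ τ₁) (φ τ₁) τ₁ ≤
          (δ * Real.sqrt ((1 - ε) / (1 + ε)) * τ₁ ^ (-(L : ℝ) / (2 * (N : ℝ)))) ^ 2 →
        ∀ τ : ℝ, τ₁ ≤ τ → τ ≤ (Δ₁ / δ) ^ (2 * (N : ℝ) / (L : ℝ)) * τ₁ →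
          W0 Q lam0 N L (ρ τ) (φ τ) τ₁ ≤ Δ₁ ^ 2 ∧
          W0 Q lam0 N L (ρ τ) (φ τ) (τ / τ₁) ≤ δ ^ 2 := by
  intro δ hδ hδΔ ρ φ hsol hinit τ hτ₁τ hτΓ
  obtain ⟨hε₀, hε₁⟩ := hε
  have hτ₁0 : 0 < τ₁ := by linarith
  set β := δ ^ 2 * τ₁ ^ (-(L : ℝ) / N) with hβ
  have hinit' : (1 + ε) * W0 Q lam0 N L (ρ τ₁) (φ τ₁) τ₁ ≤ (1 - ε) * β := by
    rw [← one_add_mul_sq_initialRadius L N (by linarith) hε₁.le hτ₁0.le]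
    gcongr
  have hstart : W0 Q lam0 N L (ρ τ₁) (φ τ₁) τ₁ ≤ β :=
    le_of_mul_le_mul_left (hinit'.trans (by gcongr; linarith)) (by linarith)
  have hW : ∀ T ∈ Icc τ₁ τ, (∀ s ∈ Icc τ₁ T, W0 Q lam0 N L (ρ s) (φ s) τ₁ ≤ Δ₁ ^ 2) →
      W0 Q lam0 N L (ρ T) (φ T) T ≤ β := fun T hT hreg =>
    le_of_mul_le_mul_left ((hsol.sandwich_le_initial (hV.differentiable one_ne_zero) hsand
      hdecay hreg (right_mem_Icc.2 hT.1)).trans hinit') (by linarith)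
  have hregion := hsol.Icc_subset_setOf_W0_le_sq hQ.le hN hL hτ₁ hδ hδΔ hτΓ hstart hW
  refine ⟨hregion (right_mem_Icc.2 hτ₁τ), ?_⟩
  calc W0 Q lam0 N L (ρ τ) (φ τ) (τ / τ₁)
      ≤ τ₁ ^ ((L : ℝ) / N) * W0 Q lam0 N L (ρ τ) (φ τ) τ :=
        W0_div_le_rpow_mul_W0 hQ.le _ _ _ _ _ hτ₁ (by linarith)
    _ ≤ τ₁ ^ ((L : ℝ) / N) * β := by gcongr; exact hW τ (right_mem_Icc.2 hτ₁τ) hregion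
    _ = δ ^ 2 := by rw [hβ, neg_div, rpow_neg hτ₁0.le]; field_simp

/-- stability on a finite but asymptotically long time interval, case
`γ_D < 0`, `M + D ≥ N`, `L > 0`: If `V` is sandwiched between `(1±ε) W₀` and `𝒟V ≤ 0`
on the region `{W₀(·,·,τ₁) ≤ Δ₁²}`, then for every `δ ∈ (0,Δ₁)`, setting
`Δ_δ = δ ((1−ε)/(1+ε))^{1/2} τ₁^{−L/(2N)}` and `Γ_δ = (Δ₁/δ)^{2N/L}`, every solution with
`W₀(ρ(τ₁),φ(τ₁),τ₁) ≤ Δ_δ²` satisfies `W₀(ρ(τ),φ(τ),τ₁) ≤ Δ₁²` and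
`W₀(ρ(τ),φ(τ),τ/τ₁) ≤ δ²` for all `τ ∈ [τ₁, Γ_δ τ₁]`. -/
theorem statement12 (Q lam0 : ℝ) (hQ : 0 < Q) (hlam0 : 0 < lam0)
    (N M L : ℕ) (hN : 1 ≤ N) (hM : 1 ≤ M) (hL : 1 ≤ L)
    (τ₁ : ℝ) (hτ₁ : 1 ≤ τ₁)
    (A B : ℝ → ℝ → ℝ → ℝ)
    (hA : Continuous fun p : ℝ × ℝ × ℝ => A p.1 p.2.1 p.2.2)
    (hB : Continuous fun p : ℝ × ℝ × ℝ => B p.1 p.2.1 p.2.2)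
    (hA0 : ∀ τ ≥ τ₁, A 0 0 τ = 0) (hB0 : ∀ τ ≥ τ₁, B 0 0 τ = 0)
    (Δ₁ ε : ℝ) (hΔ₁ : 0 < Δ₁) (hε : ε ∈ Set.Ioo (0 : ℝ) 1)
    (V : ℝ → ℝ → ℝ → ℝ)
    (hV : ContDiff ℝ 1 fun p : ℝ × ℝ × ℝ => V p.1 p.2.1 p.2.2)
    (hsand : ∀ τ ≥ τ₁, ∀ ρ φ : ℝ, W0 Q lam0 N L ρ φ τ₁ ≤ Δ₁ ^ 2 →
      (1 - ε) * W0 Q lam0 N L ρ φ τ ≤ V ρ φ τ ∧ V ρ φ τ ≤ (1 + ε) * W0 Q lam0 N L ρ φ τ)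
    (hdecay : ∀ τ ≥ τ₁, ∀ ρ φ : ℝ, W0 Q lam0 N L ρ φ τ₁ ≤ Δ₁ ^ 2 →
      DV N M A B V ρ φ τ ≤ 0) :
    ∀ δ : ℝ, 0 < δ → δ < Δ₁ →
      ∀ ρ φ : ℝ → ℝ, IsSolution N M A B τ₁ ρ φ →
        W0 Q lam0 N L (ρ τ₁) (φ τ₁) τ₁ ≤
          (δ * Real.sqrt ((1 - ε) / (1 + ε)) * τ₁ ^ (-(L : ℝ) / (2 * (N : ℝ)))) ^ 2 →
        ∀ τ : ℝ, τ₁ ≤ τ → τ ≤ (Δ₁ / δ) ^ (2 * (N : ℝ) / (L : ℝ)) * τ₁ →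
          W0 Q lam0 N L (ρ τ) (φ τ) τ₁ ≤ Δ₁ ^ 2 ∧
          W0 Q lam0 N L (ρ τ) (φ τ) (τ / τ₁) ≤ δ ^ 2 :=
  statement12_general Q lam0 hQ N M L hN hL τ₁ hτ₁ A B Δ₁ ε hε V hV hsand hdecay
end
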